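/- arXiv:1911.02015 — 2 statements merged into one kernel-verified Lean document; each statement's English description precedes it below -/
import Mathlib

section
/- Let ρ, ρ₀, h, g be positive reals and let x : ℝ → ℝ be twice differentiable with x(0) = 0, x'(0) = 0, and x''(t) = g − (ρ₀ g / (ρ h²)) x(t)² for all t. Define λ > 0 by λ² = 12 (ρ/ρ₀) h², ω > 0 by ω⁴ = (1/3)(ρ₀/ρ)(g²/h²), and u(s) = − x(s/ω)/λ. Then u'(s)² = 4 u(s)³ − u(s) for all s ∈ ℝ. -/
/-!
Multiplying `x'' = g - k x²` (with `k = ρ₀ g / (ρ h²)`) by `2 x'` and integrating from the rest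
position gives the energy identity `x'² = 2 g x - (2/3) k x³`. The scalings `λ` and `ω` are chosen
so that `λ ω² = 2 g` and `k λ = 6 ω²`, which turns the energy identity for `x` into
`u'² = 4 u³ - u` for `u(s) = -x(s/ω)/λ`.
-/

theorem sq_deriv_sub_two_mul_comp_eq {f P x : ℝ → ℝ} (hP : ∀ y, HasDerivAt P (f y) y)
    (hx : Differentiable ℝ x) (hx' : Differentiable ℝ (deriv x))
    (hode : ∀ t, deriv (deriv x) t = f (x t)) (t t₀ : ℝ) :
    deriv x t ^ 2 - 2 * P (x t) = deriv x t₀ ^ 2 - 2 * P (x t₀) := by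
  have hE : ∀ t, HasDerivAt (fun t => deriv x t ^ 2 - 2 * P (x t)) 0 t := by
    intro t
    refine (((hx' t).hasDerivAt.fun_pow 2).sub
      (((hP (x t)).comp t (hx t).hasDerivAt).const_mul 2)).congr_deriv ?_
    rw [hode]
    ring
  exact is_const_of_deriv_eq_zero (fun t => (hE t).differentiableAt) (fun t => (hE t).deriv) t t₀

theorem sq_deriv_eq_of_deriv_deriv_eq_sub_mul_sq {a b : ℝ} {x : ℝ → ℝ}
    (hx : Differentiable ℝ x) (hx' : Differentiable ℝ (deriv x))
    (hode : ∀ t, deriv (deriv x) t = a - b * x t ^ 2) (h0 : x 0 = 0) (h0' : deriv x 0 = 0)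
    (t : ℝ) : deriv x t ^ 2 = 2 * a * x t - 2 / 3 * b * x t ^ 3 := by
  have hP : ∀ y : ℝ, HasDerivAt (fun y => a * y - b / 3 * y ^ 3) (a - b * y ^ 2) y := by
    intro y
    refine (((hasDerivAt_id' y).const_mul a).sub
      ((hasDerivAt_pow 3 y).const_mul (b / 3))).congr_deriv ?_
    ring
  have h := sq_deriv_sub_two_mul_comp_eq hP hx hx' hode t 0
  simp only [h0, h0'] at h
  linarith

theorem hasDerivAt_neg_comp_div_div {x : ℝ → ℝ} {ω c s : ℝ} (hx : DifferentiableAt ℝ x (s / ω)) :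
    HasDerivAt (fun s => -x (s / ω) / c) (-deriv x (s / ω) / (c * ω)) s := by
  refine ((hx.hasDerivAt.comp s ((hasDerivAt_id' s).div_const ω)).neg.div_const c).congr_deriv ?_
  ring

theorem paraboloid_scaling_relations {ρ ρ₀ h g lam ω : ℝ} (hρ : 0 < ρ) (hρ₀ : 0 < ρ₀)
    (hh : 0 < h) (hg : 0 < g) (hlam : 0 < lam) (hlam2 : lam ^ 2 = 12 * (ρ / ρ₀) * h ^ 2)
    (hω : 0 < ω) (hω4 : ω ^ 4 = (1 / 3) * (ρ₀ / ρ) * (g ^ 2 / h ^ 2)) :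
    lam * ω ^ 2 = 2 * g ∧ ρ₀ * g / (ρ * h ^ 2) * lam = 6 * ω ^ 2 := by
  constructor
  · rw [← sq_eq_sq₀ (by positivity) (by positivity)]
    calc (lam * ω ^ 2) ^ 2 = lam ^ 2 * ω ^ 4 := by ring
      _ = (2 * g) ^ 2 := by rw [hlam2, hω4]; field_simp; ring
  · rw [← sq_eq_sq₀ (by positivity) (by positivity)]
    calc (ρ₀ * g / (ρ * h ^ 2) * lam) ^ 2 = (ρ₀ * g / (ρ * h ^ 2)) ^ 2 * lam ^ 2 := by ring
      _ = 36 * ω ^ 4 := by rw [hlam2, hω4]; field_simp; ring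
      _ = (6 * ω ^ 2) ^ 2 := by ring

theorem paraboloid_rescaled_first_integral (ρ ρ₀ h g : ℝ) (hρ : 0 < ρ) (hρ₀ : 0 < ρ₀)
    (hh : 0 < h) (hg : 0 < g) (x : ℝ → ℝ)
    (hx1 : Differentiable ℝ x) (hx2 : Differentiable ℝ (deriv x))
    (h0 : x 0 = 0) (h0' : deriv x 0 = 0)
    (hode : ∀ t : ℝ, deriv (deriv x) t = g - (ρ₀ * g / (ρ * h ^ 2)) * x t ^ 2)
    (lam ω : ℝ) (hlam : 0 < lam) (hlam2 : lam ^ 2 = 12 * (ρ / ρ₀) * h ^ 2)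
    (hω : 0 < ω) (hω4 : ω ^ 4 = (1 / 3) * (ρ₀ / ρ) * (g ^ 2 / h ^ 2)) :
    let u : ℝ → ℝ := fun s => -x (s / ω) / lam
    ∀ s : ℝ, (deriv u s) ^ 2 = 4 * u s ^ 3 - u s := by
  intro u s
  have henergy := sq_deriv_eq_of_deriv_deriv_eq_sub_mul_sq hx1 hx2 hode h0 h0' (s / ω)
  obtain ⟨hlamω, hklam⟩ := paraboloid_scaling_relations hρ hρ₀ hh hg hlam hlam2 hω hω4
  rw [(hasDerivAt_neg_comp_div_div (c := lam) (hx1 (s / ω))).deriv]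
  simp only [u]
  field_simp
  linear_combination lam * henergy - lam * x (s / ω) * hlamω - 2 / 3 * x (s / ω) ^ 3 * hklam
end

section
/- Let ρ, ρ₀, h, g be positive reals and let x : ℝ → ℝ be twice differentiable with x(0) = h, x'(0) = 0, and x''(t) = g − (ρ₀ g / (ρ h²)) x(t)² for all t. Define λ > 0 by λ² = 12 (ρ/ρ₀) h², ω > 0 by ω⁴ = (1/3)(ρ₀/ρ)(g²/h²), and u(s) = − x(s/ω)/λ. Then for all s ∈ ℝ, u'(s)² = 4 u(s)³ − u(s) − g₃, where g₃ = (1/2) √(ρ₀/(3ρ)) (1 − ρ₀/(3ρ)). -/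
/-!
Multiplying `x'' = g - k x²` (with `k = ρ₀ g / (ρ h²)`) by `2 x'` gives the energy integral
`x'² - 2 g x + (2/3) k x³ = const`. The scales are chosen so that `λ ω² = 2 g` and `k λ² = 12 g`,
which turns this integral into `u'² - (4 u³ - u) = const` for `u(s) = -x(s/ω)/λ`. At `s = 0` we
have `u' = 0` and `u = -h/λ`, and `h/λ = ½ √(ρ₀/(3ρ))`, so the constant is `-g₃`.
-/

theorem deriv_sq_add_two_mul_potential_eq {x V V' : ℝ → ℝ} (hx : Differentiable ℝ x)
    (hx' : Differentiable ℝ (deriv x)) (hV : ∀ y, HasDerivAt V (V' y) y)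
    (hode : ∀ t, deriv (deriv x) t = -V' (x t)) (t s : ℝ) :
    deriv x t ^ 2 + 2 * V (x t) = deriv x s ^ 2 + 2 * V (x s) := by
  have hE : ∀ t, HasDerivAt (fun t => deriv x t ^ 2 + 2 * V (x t)) 0 t := fun t =>
    (((hx' t).hasDerivAt.pow 2).add (((hV (x t)).comp t (hx t).hasDerivAt).const_mul 2)).congr_deriv
      (by rw [hode]; push_cast; ring)
  exact is_const_of_deriv_eq_zero (fun t => (hE t).differentiableAt) (fun t => (hE t).deriv) t s

theorem deriv_neg_comp_div_div (x : ℝ → ℝ) (ω lam s : ℝ) :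
    deriv (fun s => -x (s / ω) / lam) s = -deriv x (s / ω) / (lam * ω) := by
  simp only [div_eq_inv_mul _ ω, deriv_div_const, deriv.fun_neg]
  rw [deriv_comp_mul_left ω⁻¹ x s, smul_eq_mul]
  field_simp

theorem rescale_sq_deriv_sub_cubic_eq {x : ℝ → ℝ} {a b lam ω : ℝ}
    (hx : Differentiable ℝ x) (hx' : Differentiable ℝ (deriv x))
    (hode : ∀ t, deriv (deriv x) t = a - b * x t ^ 2)
    (hlam : lam ≠ 0) (hω : ω ≠ 0) (ha : lam * ω ^ 2 = 2 * a) (hb : b * lam ^ 2 = 12 * a)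
    (s : ℝ) :
    let u : ℝ → ℝ := fun s => -x (s / ω) / lam
    deriv u s ^ 2 - (4 * u s ^ 3 - u s) = deriv u 0 ^ 2 - (4 * u 0 ^ 3 - u 0) := by
  intro u
  have hV (y : ℝ) : HasDerivAt (fun y => -a * y + b / 3 * y ^ 3) (-a + b * y ^ 2) y :=
    (((hasDerivAt_id y).const_mul (-a)).add
      ((hasDerivAt_pow 3 y).const_mul (b / 3))).congr_deriv (by push_cast; ring)
  have henergy := deriv_sq_add_two_mul_potential_eq hx hx' hV
    (fun t => by rw [hode]; ring) (s / ω) 0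
  have hb0 : b ≠ 0 := by
    rintro rfl
    have : lam * ω ^ 2 ≠ 0 := by positivity
    exact this (by linarith)
  have hω2 : ω ^ 2 = b * lam / 6 := by
    field_simp
    apply mul_left_cancel₀ hlam
    linear_combination 6 * ha - hb
  have ha' : a = b * lam ^ 2 / 12 := by linear_combination -hb / 12
  simp only [u, deriv_neg_comp_div_div, zero_div]
  rw [ha'] at henergy
  simp only [div_pow, mul_pow, hω2]
  field_simp
  linear_combination 6 * henergy

theorem paraboloid_scale_mul_sq_eq {ρ ρ₀ h g lam ω : ℝ} (hρ : 0 < ρ) (hρ₀ : 0 < ρ₀) (hh : 0 < h)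
    (hg : 0 < g) (hlam : 0 < lam) (hlam2 : lam ^ 2 = 12 * (ρ / ρ₀) * h ^ 2) (hω : 0 < ω)
    (hω4 : ω ^ 4 = (1 / 3) * (ρ₀ / ρ) * (g ^ 2 / h ^ 2)) :
    lam * ω ^ 2 = 2 * g := by
  refine (pow_left_inj₀ (by positivity) (by positivity) two_ne_zero).1 ?_
  rw [mul_pow, ← pow_mul, hlam2, hω4]
  field_simp
  ring

theorem paraboloid_coeff_mul_scale_sq_eq {ρ ρ₀ h lam : ℝ} (hρ : 0 < ρ) (hρ₀ : 0 < ρ₀) (hh : 0 < h)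
    (hlam2 : lam ^ 2 = 12 * (ρ / ρ₀) * h ^ 2) (g : ℝ) :
    ρ₀ * g / (ρ * h ^ 2) * lam ^ 2 = 12 * g := by
  rw [hlam2]
  field_simp

theorem paraboloid_depth_div_scale_eq {ρ ρ₀ h lam : ℝ} (hρ : 0 < ρ) (hρ₀ : 0 < ρ₀) (hh : 0 < h)
    (hlam : 0 < lam) (hlam2 : lam ^ 2 = 12 * (ρ / ρ₀) * h ^ 2) :
    h / lam = Real.sqrt (ρ₀ / (3 * ρ)) / 2 := by
  refine (pow_left_inj₀ (by positivity) (by positivity) two_ne_zero).1 ?_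
  rw [div_pow, div_pow, hlam2, Real.sq_sqrt (by positivity)]
  field_simp
  ring

theorem paraboloid_g₃_eq {ρ ρ₀ h lam : ℝ} (hρ : 0 < ρ) (hρ₀ : 0 < ρ₀) (hh : 0 < h)
    (hlam : 0 < lam) (hlam2 : lam ^ 2 = 12 * (ρ / ρ₀) * h ^ 2) :
    (1 / 2) * Real.sqrt (ρ₀ / (3 * ρ)) * (1 - ρ₀ / (3 * ρ)) = h / lam - 4 * (h / lam) ^ 3 := by
  have hratio := paraboloid_depth_div_scale_eq hρ hρ₀ hh hlam hlam2
  have hsq : (h / lam) ^ 2 = ρ₀ / (3 * ρ) / 4 := by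
    rw [hratio, div_pow, Real.sq_sqrt (by positivity)]
    ring
  linear_combination (4 * (h / lam)) * hsq - hratio * (1 - ρ₀ / (3 * ρ))

theorem paraboloid_ascent_rescaled_first_integral (ρ ρ₀ h g : ℝ) (hρ : 0 < ρ)
    (hρ₀ : 0 < ρ₀) (hh : 0 < h) (hg : 0 < g) (x : ℝ → ℝ)
    (hx1 : Differentiable ℝ x) (hx2 : Differentiable ℝ (deriv x))
    (h0 : x 0 = h) (h0' : deriv x 0 = 0)
    (hode : ∀ t : ℝ, deriv (deriv x) t = g - (ρ₀ * g / (ρ * h ^ 2)) * x t ^ 2)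
    (lam ω : ℝ) (hlam : 0 < lam) (hlam2 : lam ^ 2 = 12 * (ρ / ρ₀) * h ^ 2)
    (hω : 0 < ω) (hω4 : ω ^ 4 = (1 / 3) * (ρ₀ / ρ) * (g ^ 2 / h ^ 2)) :
    let u : ℝ → ℝ := fun s => -x (s / ω) / lam
    let g₃ : ℝ := (1 / 2) * Real.sqrt (ρ₀ / (3 * ρ)) * (1 - ρ₀ / (3 * ρ))
    ∀ s : ℝ, (deriv u s) ^ 2 = 4 * u s ^ 3 - u s - g₃ := by
  intro u g₃ s
  have hfirst : deriv u s ^ 2 - (4 * u s ^ 3 - u s) = deriv u 0 ^ 2 - (4 * u 0 ^ 3 - u 0) :=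
    rescale_sq_deriv_sub_cubic_eq hx1 hx2 hode hlam.ne' hω.ne'
      (paraboloid_scale_mul_sq_eq hρ hρ₀ hh hg hlam hlam2 hω hω4)
      (paraboloid_coeff_mul_scale_sq_eq hρ hρ₀ hh hlam2 g) s
  have hu0 : u 0 = -(h / lam) := by simp [u, h0, neg_div]
  have hu0' : deriv u 0 = 0 := by
    simp only [u]
    rw [deriv_neg_comp_div_div, zero_div, h0', neg_zero, zero_div]
  rw [hu0, hu0'] at hfirst
  simp only [g₃]
  rw [paraboloid_g₃_eq hρ hρ₀ hh hlam hlam2]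
  linear_combination hfirst
end
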